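/- Let c ≥ 1 and d ≥ 0 be integers. For every integer m ≥ 0, the map μ_m : 𝓛_std^(m) → Mon(F_m) sending w to x^u e_π, where η(w) = (x^u,(π(1),…,π(d))), is a bijection; consequently μ : 𝓛_std → Mon(F) is a bijection. More precisely, if x^u e_π = x_{•,1}^{u_1}⋯x_{•,m}^{u_m} e_π ∈ Mon(F_m) (with u_k ∈ ℕ^c the exponents of the width-k variables), then the unique word w ∈ 𝓛_std^(m) with μ(w) = x^u e_π is w = ξ^{u_1} τ_{ι(1)} ξ^{u_2} τ_{ι(2)} ⋯ ξ^{u_m} τ_{ι(m)}, where ξ^a denotes ξ_1^{a_1}⋯ξ_c^{a_c} for a ∈ ℕ^c, and ι(k) = 0 if π(d) < k ≤ m, while ι(k) = j if π(j−1) < k ≤ π(j) (with the convention π(0) = 0). -/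

import Mathlib

noncomputable section
open scoped Computability

/-- The alphabet `Σ = {ξ_1,…,ξ_c, τ_0,…,τ_d}`. -/
inductive Letter (c d : ℕ) : Type
  | xi : Fin c → Letter c d
  | tau : Fin (d + 1) → Letter c d
deriving DecidableEq

/-- A word is *standard* if in every occurrence of two consecutive ξ-letters
`ξ_i ξ_j` one has `i ≤ j`. -/
def Standard {c d : ℕ} : List (Letter c d) → Prop :=
  List.Chain' fun a b => ∀ i j : Fin c, a = Letter.xi i → b = Letter.xi j → (i : ℕ) ≤ (j : ℕ)

/-- A *simple* word contains no τ-letters. -/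
def SimpleWord {c d : ℕ} (w : List (Letter c d)) : Prop :=
  ∀ a ∈ w, ∃ i, a = Letter.xi i

/-- Test for τ-letters. -/
def isTau {c d : ℕ} : Letter c d → Bool
  | Letter.tau _ => true
  | Letter.xi _ => false

/-- The number of τ-letters occurring in a word. -/
def tauCount {c d : ℕ} (w : List (Letter c d)) : ℕ := (w.filter isTau).length

/-- The language of one-letter words with letter drawn from `S`. -/
def letterLang {c d : ℕ} (S : Set (Letter c d)) : Language (Letter c d) :=
  {w | ∃ a ∈ S, w = [a]}

/-- The set of ξ-letters. -/
def xiSet (c d : ℕ) : Set (Letter c d) := Set.range Letter.xi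

/-- The language `𝓛_j = {ξ_1,…,ξ_c, τ_j}*`. -/
def LL (c d : ℕ) (j : Fin (d + 1)) : Language (Letter c d) :=
  (letterLang (xiSet c d ∪ {Letter.tau j}))∗

/-- The language `𝓛̄_j = ({ξ_1,…,ξ_c}* τ_j)*`. -/
def LLbar (c d : ℕ) (j : Fin (d + 1)) : Language (Letter c d) :=
  ((letterLang (xiSet c d))∗ * ({[Letter.tau j]} : Language (Letter c d)))∗

/-- The language `𝓛 = 𝓛_1 τ_1 𝓛_2 τ_2 ⋯ 𝓛_d τ_d 𝓛̄_0`. -/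
def LFull (c d : ℕ) : Language (Letter c d) :=
  (((List.finRange d).map fun j : Fin d =>
      LL c d j.succ * ({[Letter.tau j.succ]} : Language (Letter c d))).prod) * LLbar c d 0

/-- The language `𝓛_std` of standard words of `𝓛`. -/
def LStd (c d : ℕ) : Language (Letter c d) :=
  {w | w ∈ LFull c d ∧ Standard w}

/-- Monomials of `P = (X^{OI,1})^{⊗c}` (of arbitrary width), encoded by their exponent
vectors: `u (i, l)` is the exponent of the variable `x_{i,l+1}`. -/
abbrev MonP (c : ℕ) : Type := (Fin c × ℕ) →₀ ℕ

/-- Shift all variables one column to the right: `x_{k,l} ↦ x_{k,l+1}`. -/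
def shiftMon {c : ℕ} (u : MonP c) : MonP c :=
  Finsupp.mapDomain (fun v : Fin c × ℕ => (v.1, v.2 + 1)) u

/-- The shifting operator `T_i`: on the monomial it sends `x_{k,l} ↦ x_{k,l+1}`
(multiplicatively), and on a tuple `(p_1,…,p_d)` it adds `1` to `p_j` for `j ≥ i`
(1-based `j`), while `T_0` leaves the tuple unchanged. -/
def TOp {c d : ℕ} (i : Fin (d + 1)) (q : MonP c × (Fin d → ℕ)) : MonP c × (Fin d → ℕ) :=
  (shiftMon q.1,
    fun k => if 1 ≤ (i : ℕ) ∧ (i : ℕ) ≤ (k : ℕ) + 1 then q.2 k + 1 else q.2 k)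

/-- The map `η : Σ* → Mon(P) × ℕ^d`:  `η(e) = (1,(0,…,0))`, `η(ξ_i w) = x_{i,1}·η(w)`,
`η(τ_i w) = T_i(η(w))`. -/
def eta {c d : ℕ} : List (Letter c d) → MonP c × (Fin d → ℕ)
  | [] => (0, fun _ => 0)
  | Letter.xi i :: w => (Finsupp.single ((i : Fin c), (0 : ℕ)) 1 + (eta w).1, (eta w).2)
  | Letter.tau i :: w => TOp i (eta w)

/-- The set of monomials `x^u e_π` of the width-`m` component `F_m` of the free OI-module
`F^{OI,d}`, encoded as pairs `(u, p)` where `u (i,l)` is the exponent of `x_{i,l+1}`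
(so all variables have column `≤ m`) and `p = (π(1),…,π(d))` is a strictly increasing
tuple with values in `{1,…,m}`. -/
def MonFSet (c d m : ℕ) : Set (MonP c × (Fin d → ℕ)) :=
  {q | (∀ v ∈ q.1.support, v.2 < m) ∧ StrictMono q.2 ∧ ∀ k, 1 ≤ q.2 k ∧ q.2 k ≤ m}

/-- The standard simple word `ξ^a = ξ_1^{a_1} ⋯ ξ_c^{a_c}`. -/
def xiWord (c d : ℕ) (a : Fin c → ℕ) : List (Letter c d) :=
  ((List.finRange c).map fun i => List.replicate (a i) (Letter.xi i : Letter c d)).flatten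

/-- The index `ι(k+1)` attached to the (1-based) column `k+1`:
`ι(k+1) = j` if `π(j-1) < k+1 ≤ π(j)` and `ι(k+1) = 0` if `π(d) < k+1`. -/
def iotaIdx {d : ℕ} (p : Fin d → ℕ) (k : ℕ) : Fin (d + 1) :=
  if h : (Finset.univ.filter fun j : Fin d => k + 1 ≤ p j).Nonempty
  then ((Finset.univ.filter fun j : Fin d => k + 1 ≤ p j).min' h).succ
  else 0

/-- The word `ξ^{u_1} τ_{ι(1)} ξ^{u_2} τ_{ι(2)} ⋯ ξ^{u_m} τ_{ι(m)}` associated to a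
monomial `x^u e_π` of `F_m`. -/
def canonWord (c d m : ℕ) (u : MonP c) (p : Fin d → ℕ) : List (Letter c d) :=
  ((List.range m).map fun k =>
    xiWord c d (fun i => u (i, k)) ++ [Letter.tau (iotaIdx p k)]).flatten

/-!
A word of `𝓛` is empty or ends in a τ-letter, so it is a concatenation of blocks `v_k τ_{t_k}`
with simple `v_k`, and it is standard exactly when every `v_k` is sorted, i.e. `v_k = ξ^{a_k}`.
Reading `η` from the right, the `k`-th block contributes `x^{a_k}` in column `k`, and `τ_{t_k}`
raises `π(j)` exactly when `1 ≤ t_k ≤ j`, so `π(j) = #{k | 1 ≤ t_k ≤ j}`. Membership in `𝓛`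
says that `t_1, …, t_m` runs through `1, …, d`, each value at least once, and then through `0`.
For such sequences `π` is strictly increasing with values in `[1, m]`, and `ι` recovers the
sequence from `π` because, in the order `1 < ⋯ < d < 0`, `t_k ≤ j ↔ k ≤ π(j)`; conversely every
such `π` comes from the sequence `t_k = ι(k)`.
-/

namespace List

variable {α β : Type*}

theorem countP_lt_countP {p q : α → Bool} {l : List α} (hpq : ∀ x ∈ l, p x → q x)
    {a : α} (ha : a ∈ l) (hqa : q a) (hpa : ¬p a) : l.countP p < l.countP q := by
  induction l with
  | nil => simp at ha
  | cons b l ih =>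
    rw [forall_mem_cons] at hpq
    rw [countP_cons, countP_cons]
    rcases mem_cons.mp ha with rfl | ha
    · have := countP_mono_left hpq.2
      rw [if_pos hqa, if_neg hpa]
      omega
    · have := ih hpq.2 ha
      by_cases hpb : p b
      · rw [if_pos hpb, if_pos (hpq.1 hpb)]
        omega
      · rw [if_neg hpb]
        split_ifs <;> omega

theorem succ_le_countP_iff_of_pairwise [LinearOrder β] {f : α → β} {l : List α}
    (hl : l.Pairwise (f · ≤ f ·)) (b : β) {k : ℕ} (hk : k < l.length) :
    k + 1 ≤ l.countP (fun a => f a ≤ b) ↔ f l[k] ≤ b := by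
  induction l generalizing k with
  | nil => simp at hk
  | cons a l ih =>
    rw [pairwise_cons] at hl
    by_cases hab : f a ≤ b
    · rw [countP_cons, if_pos (by simpa using hab)]
      cases k with
      | zero => simpa using hab
      | succ k => simpa using ih hl.2 (by simpa using hk)
    · have hzero : (a :: l).countP (fun a => f a ≤ b) = 0 :=
        countP_eq_zero.mpr fun x hx hxb => hab <| by
          rcases mem_cons.mp hx with rfl | hx
          · simpa using hxb
          · exact (hl.1 x hx).trans (by simpa using hxb)
      rw [hzero]
      cases k with
      | zero => simpa using hab
      | succ k => simpa using fun h => hab ((hl.1 _ (getElem_mem _)).trans h)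

theorem countP_range_lt (m n : ℕ) : (range m).countP (fun k => k < n) = min n m := by
  induction m with
  | zero => simp
  | succ m ih =>
    rw [range_succ, countP_append, ih]
    by_cases h : m < n <;> simp [h] <;> omega

end List

section Words

variable {c d : ℕ}

theorem mem_kstar_letterLang {S : Set (Letter c d)} {w : List (Letter c d)} :
    w ∈ (letterLang S)∗ ↔ ∀ a ∈ w, a ∈ S := by
  rw [Language.mem_kstar]
  constructor
  · rintro ⟨L, rfl, hL⟩ a ha
    obtain ⟨l, hl, hal⟩ := List.mem_flatten.mp ha
    obtain ⟨b, hb, rfl⟩ := hL l hl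
    rwa [List.mem_singleton.mp hal]
  · intro h
    refine ⟨w.map ([·]), (List.flatMap_singleton' w).symm, fun y hy => ?_⟩
    obtain ⟨a, ha, rfl⟩ := List.mem_map.mp hy
    exact ⟨a, h a ha, rfl⟩

theorem forall_mem_xiSet_iff {w : List (Letter c d)} :
    (∀ a ∈ w, a ∈ xiSet c d) ↔ ∃ idx : List (Fin c), idx.map Letter.xi = w := by
  rw [← Set.mem_range, Set.range_list_map]
  rfl

@[elab_as_elim]
theorem induction_blocks {P : List (Letter c d) → Prop}
    (simple : ∀ idx : List (Fin c), P (idx.map Letter.xi))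
    (block : ∀ (idx : List (Fin c)) (t : Fin (d + 1)) (w : List (Letter c d)),
      P w → P (idx.map Letter.xi ++ Letter.tau t :: w))
    (w : List (Letter c d)) : P w := by
  suffices ∀ idx : List (Fin c), P (idx.map Letter.xi ++ w) by simpa using this []
  induction w with
  | nil => simpa using simple
  | cons a w ih =>
    intro idx
    cases a with
    | xi i => simpa using ih (idx ++ [i])
    | tau t => exact block idx t w (by simpa using ih [])

theorem eq_map_xi_or_eq_block (w : List (Letter c d)) :
    (∃ idx : List (Fin c), w = idx.map Letter.xi) ∨
      ∃ (idx : List (Fin c)) (t : Fin (d + 1)) (w' : List (Letter c d)),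
        w = idx.map Letter.xi ++ Letter.tau t :: w' := by
  induction w using induction_blocks with
  | simple idx => exact .inl ⟨idx, rfl⟩
  | block idx t w _ => exact .inr ⟨idx, t, w, rfl⟩

theorem block_inj {idx idx' : List (Fin c)} {t t' : Fin (d + 1)} {w w' : List (Letter c d)} :
    idx.map Letter.xi ++ Letter.tau t :: w = idx'.map Letter.xi ++ Letter.tau t' :: w' ↔
      idx = idx' ∧ t = t' ∧ w = w' := by
  refine ⟨fun h => ?_, by rintro ⟨rfl, rfl, rfl⟩; rfl⟩
  induction idx generalizing idx' with
  | nil => cases idx' <;> simp_all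
  | cons i idx ih =>
    cases idx' with
    | nil => simp at h
    | cons i' idx' =>
      simp only [List.map_cons, List.cons_append, List.cons.injEq, Letter.xi.injEq] at h
      obtain ⟨rfl, h⟩ := h
      simpa using ih h

def Letter.tauIndex? : Letter c d → Option (Fin (d + 1))
  | .xi _ => none
  | .tau t => some t

def tauIdx (w : List (Letter c d)) : List (Fin (d + 1)) := w.filterMap Letter.tauIndex?

@[simp]
theorem tauIdx_cons_tau (t : Fin (d + 1)) (w : List (Letter c d)) :
    tauIdx (Letter.tau t :: w) = t :: tauIdx w := rfl

@[simp]
theorem tauIdx_map_xi (idx : List (Fin c)) : tauIdx (d := d) (idx.map Letter.xi) = [] := by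
  simp [tauIdx, Letter.tauIndex?]

@[simp]
theorem tauIdx_block (idx : List (Fin c)) (t : Fin (d + 1)) (w : List (Letter c d)) :
    tauIdx (idx.map Letter.xi ++ Letter.tau t :: w) = t :: tauIdx w := by
  simp [tauIdx, Letter.tauIndex?]

theorem tauCount_eq_length_tauIdx (w : List (Letter c d)) : tauCount w = (tauIdx w).length := by
  induction w with
  | nil => rfl
  | cons a w ih =>
    cases a <;> simp_all [tauCount, tauIdx, isTau, Letter.tauIndex?, List.filter_cons,
      List.filterMap_cons]

theorem map_xi_ne_block (idx idx' : List (Fin c)) (t : Fin (d + 1)) (w : List (Letter c d)) :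
    idx.map Letter.xi ≠ idx'.map Letter.xi ++ Letter.tau t :: w :=
  fun h => by simpa using congrArg tauIdx h

def EndsInTau (w : List (Letter c d)) : Prop := ∀ a ∈ w.getLast?, isTau a = true

@[simp]
theorem endsInTau_map_xi {idx : List (Fin c)} :
    EndsInTau (d := d) (idx.map Letter.xi) ↔ idx = [] := by
  rcases idx.eq_nil_or_concat with rfl | ⟨idx, i, rfl⟩
  · simp [EndsInTau]
  · simp [EndsInTau, isTau]

@[simp]
theorem endsInTau_block {idx : List (Fin c)} {t : Fin (d + 1)} {w : List (Letter c d)} :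
    EndsInTau (idx.map Letter.xi ++ Letter.tau t :: w) ↔ EndsInTau w := by
  cases h : w.getLast? <;> simp [EndsInTau, List.getLast?_cons, h, isTau]

end Words

section TauRank

variable {d : ℕ}

/-- The position of `τ_t` in the order `τ_1 < ⋯ < τ_d < τ_0` in which τ-letters occur in the
words of `𝓛`. -/
def tauRank (t : Fin (d + 1)) : ℕ := if t = 0 then d + 1 else t

@[simp]
theorem tauRank_zero : tauRank (0 : Fin (d + 1)) = d + 1 := if_pos rfl

@[simp]
theorem tauRank_succ (j : Fin d) : tauRank j.succ = j + 1 :=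
  (if_neg (Fin.succ_ne_zero j)).trans (Fin.val_succ j)

theorem tauRank_cases (t : Fin (d + 1)) :
    (t = 0 ∧ tauRank t = d + 1) ∨ ∃ j : Fin d, t = j.succ ∧ tauRank t = j + 1 := by
  cases t using Fin.cases with
  | zero => exact .inl ⟨rfl, tauRank_zero⟩
  | succ j => exact .inr ⟨j, rfl, tauRank_succ j⟩

theorem tauRank_injective : Function.Injective (tauRank (d := d)) := by
  intro s t h
  rcases tauRank_cases s with ⟨rfl, hs⟩ | ⟨i, rfl, hs⟩ <;>
    rcases tauRank_cases t with ⟨rfl, ht⟩ | ⟨j, rfl, ht⟩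
  · rfl
  · have := j.isLt; omega
  · have := i.isLt; omega
  · rw [Fin.succ_inj, Fin.ext_iff]; omega

theorem tauRank_pos (t : Fin (d + 1)) : 0 < tauRank t := by
  rcases tauRank_cases t with ⟨-, h⟩ | ⟨j, -, h⟩ <;> omega

theorem tauRank_le (t : Fin (d + 1)) : tauRank t ≤ d + 1 := by
  rcases tauRank_cases t with ⟨-, h⟩ | ⟨j, -, h⟩ <;> omega

theorem tauRank_le_succ_iff (t : Fin (d + 1)) (j : Fin d) :
    tauRank t ≤ j + 1 ↔ 1 ≤ (t : ℕ) ∧ (t : ℕ) ≤ j + 1 := by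
  rcases tauRank_cases t with ⟨rfl, h⟩ | ⟨i, rfl, h⟩
  · simp [h, j.isLt]
  · simp [h]

/-- The τ-index sequences of the words of `𝓛_{k+1} τ_{k+1} ⋯ 𝓛_d τ_d 𝓛̄_0`: they run through
`k+1, …, d`, each value at least once, and then through `0`. -/
def TauAdmissible (k : ℕ) (ts : List (Fin (d + 1))) : Prop :=
  ts.Pairwise (tauRank · ≤ tauRank ·) ∧ (∀ t ∈ ts, k < tauRank t) ∧
    ∀ j : Fin d, k ≤ j → j.succ ∈ ts

theorem tauAdmissible_nil {k : ℕ} : TauAdmissible k ([] : List (Fin (d + 1))) ↔ d ≤ k := by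
  constructor
  · rintro ⟨-, -, h⟩
    by_contra! hk
    exact List.not_mem_nil (h ⟨k, hk⟩ le_rfl)
  · intro h
    refine ⟨.nil, by simp, fun j hj => absurd j.isLt (by omega)⟩

theorem TauAdmissible.head_eq {k : ℕ} (hk : k < d) {t : Fin (d + 1)} {ts : List (Fin (d + 1))}
    (h : TauAdmissible k (t :: ts)) : t = (⟨k, hk⟩ : Fin d).succ := by
  obtain ⟨hp, hr, hc⟩ := h
  refine tauRank_injective (le_antisymm ?_ ?_)
  · rcases List.mem_cons.mp (hc ⟨k, hk⟩ le_rfl) with h | h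
    · rw [← h]
    · exact (List.pairwise_cons.mp hp).1 _ h
  · rw [tauRank_succ]
    exact hr t List.mem_cons_self

theorem TauAdmissible.tail {k : ℕ} (hk : k < d) {t : Fin (d + 1)} {ts : List (Fin (d + 1))}
    (h : TauAdmissible k (t :: ts)) : TauAdmissible k ts ∨ TauAdmissible (k + 1) ts := by
  set s := (⟨k, hk⟩ : Fin d).succ
  have hts : t = s := h.head_eq hk
  obtain ⟨hp, hr, hc⟩ := h
  rw [List.forall_mem_cons] at hr
  by_cases hmem : s ∈ ts
  · refine .inl ⟨(List.pairwise_cons.mp hp).2, hr.2, fun j hj => ?_⟩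
    rcases List.mem_cons.mp (hc j hj) with h | h
    · rwa [h, hts]
    · exact h
  · refine .inr ⟨(List.pairwise_cons.mp hp).2, fun t' ht' => ?_, fun j hj => ?_⟩
    · have : tauRank t' ≠ k + 1 := fun h => by
        obtain rfl : t' = s := tauRank_injective (h.trans (tauRank_succ ⟨k, hk⟩).symm)
        exact hmem ht'
      have := hr.2 t' ht'
      omega
    · rcases List.mem_cons.mp (hc j (by omega)) with h | h
      · have : (j : ℕ) = k := by simpa [hts, s, Fin.ext_iff] using h
        omega
      · exact h

theorem tauAdmissible_cons_of_lt {k : ℕ} (hk : k < d) {t : Fin (d + 1)} {ts : List (Fin (d + 1))} :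
    TauAdmissible k (t :: ts) ↔
      t = (⟨k, hk⟩ : Fin d).succ ∧ (TauAdmissible k ts ∨ TauAdmissible (k + 1) ts) := by
  refine ⟨fun h => ⟨h.head_eq hk, h.tail hk⟩, ?_⟩
  rintro ⟨rfl, h⟩
  have hr : ∀ t' ∈ ts, k + 1 ≤ tauRank t' := by
    rcases h with ⟨-, hr, -⟩ | ⟨-, hr, -⟩ <;> exact fun t' ht' => by have := hr t' ht'; omega
  refine ⟨List.pairwise_cons.mpr ⟨fun t' ht' => ?_, ?_⟩,
    List.forall_mem_cons.mpr ⟨by rw [tauRank_succ]; exact k.lt_succ_self, hr⟩, fun j hj => ?_⟩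
  · rw [tauRank_succ]
    exact hr t' ht'
  · rcases h with ⟨hp, -⟩ | ⟨hp, -⟩ <;> exact hp
  · rcases hj.lt_or_eq with hj | hj
    · rcases h with ⟨-, -, hc⟩ | ⟨-, -, hc⟩
      · exact List.mem_cons_of_mem _ (hc j hj.le)
      · exact List.mem_cons_of_mem _ (hc j hj)
    · rw [show j = ⟨k, hk⟩ from Fin.ext hj.symm]
      exact List.mem_cons_self

theorem self_lt_tauRank_iff {t : Fin (d + 1)} : d < tauRank t ↔ t = 0 := by
  rcases tauRank_cases t with ⟨rfl, h⟩ | ⟨j, rfl, h⟩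
  · simp
  · simp [h, Fin.succ_ne_zero, j.isLt]

theorem tauAdmissible_self_cons {t : Fin (d + 1)} {ts : List (Fin (d + 1))} :
    TauAdmissible d (t :: ts) ↔ t = 0 ∧ TauAdmissible d ts := by
  have not_le (j : Fin d) : ¬d ≤ j := by simp
  constructor
  · rintro ⟨hp, hr, -⟩
    rw [List.forall_mem_cons] at hr
    exact ⟨self_lt_tauRank_iff.mp hr.1, (List.pairwise_cons.mp hp).2, hr.2,
      fun j hj => absurd hj (not_le j)⟩
  · rintro ⟨rfl, hp, hr, -⟩
    refine ⟨List.pairwise_cons.mpr ⟨fun t' ht' => ?_, hp⟩,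
      List.forall_mem_cons.mpr ⟨by simp, hr⟩, fun j hj => absurd hj (not_le j)⟩
    rw [self_lt_tauRank_iff.mp (hr t' ht')]

end TauRank

section Languages

variable {c d : ℕ}

theorem mem_LL_mul_tau_mul {s : Fin (d + 1)} {L : Language (Letter c d)} {w : List (Letter c d)} :
    w ∈ LL c d s * {[Letter.tau s]} * L ↔
      ∃ x y, w = x ++ Letter.tau s :: y ∧ (∀ a ∈ x, a ∈ xiSet c d ∪ {Letter.tau s}) ∧ y ∈ L := by
  simp only [Language.mem_mul, LL, mem_kstar_letterLang]
  constructor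
  · rintro ⟨_, ⟨x, hx, _, rfl, rfl⟩, y, hy, rfl⟩
    exact ⟨x, y, by simp, hx, hy⟩
  · rintro ⟨x, y, rfl, hx, hy⟩
    exact ⟨_, ⟨x, hx, _, rfl, rfl⟩, y, hy, by simp⟩

theorem map_xi_notMem_LL_mul_tau_mul {s : Fin (d + 1)} {L : Language (Letter c d)}
    (idx : List (Fin c)) : idx.map Letter.xi ∉ LL c d s * {[Letter.tau s]} * L := by
  rw [mem_LL_mul_tau_mul]
  rintro ⟨x, y, h, -, -⟩
  have : Letter.tau s ∈ idx.map Letter.xi := h ▸ by simp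
  simp at this

theorem block_mem_LL_mul_tau_mul_iff {s t : Fin (d + 1)} {L : Language (Letter c d)}
    {idx : List (Fin c)} {w : List (Letter c d)} :
    idx.map Letter.xi ++ Letter.tau t :: w ∈ LL c d s * {[Letter.tau s]} * L ↔
      t = s ∧ (w ∈ LL c d s * {[Letter.tau s]} * L ∨ w ∈ L) := by
  simp only [mem_LL_mul_tau_mul]
  constructor
  · rintro ⟨x, y, h, hx, hy⟩
    rcases eq_map_xi_or_eq_block x with ⟨idx', rfl⟩ | ⟨idx', t', x', rfl⟩
    · obtain ⟨-, rfl, rfl⟩ := block_inj.mp h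
      exact ⟨rfl, .inr hy⟩
    · rw [List.append_assoc, List.cons_append] at h
      obtain ⟨-, rfl, rfl⟩ := block_inj.mp h
      have ht : Letter.tau t ∈ xiSet c d ∪ {Letter.tau s} := hx _ (by simp)
      simp only [xiSet, Set.mem_union, Set.mem_range, reduceCtorEq, exists_false,
        Set.mem_singleton_iff, Letter.tau.injEq, false_or] at ht
      exact ⟨ht, .inl ⟨x', y, rfl, fun a ha => hx a (by simp [ha]), hy⟩⟩
  · rintro ⟨rfl, ⟨x, y, rfl, hx, hy⟩ | hw⟩
    · refine ⟨idx.map Letter.xi ++ Letter.tau t :: x, y, by simp, fun a ha => ?_, hy⟩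
      simp only [List.mem_append, List.mem_map, List.mem_cons] at ha
      rcases ha with ⟨i, -, rfl⟩ | rfl | ha
      · exact .inl ⟨i, rfl⟩
      · exact .inr rfl
      · exact hx a ha
    · refine ⟨idx.map Letter.xi, w, rfl, fun a ha => ?_, hw⟩
      obtain ⟨i, -, rfl⟩ := List.mem_map.mp ha
      exact .inl ⟨i, rfl⟩

theorem mem_LLbar_iff {j : Fin (d + 1)} {w : List (Letter c d)} :
    w ∈ LLbar c d j ↔
      w = [] ∨ ∃ (idx : List (Fin c)) (w' : List (Letter c d)),
        w = idx.map Letter.xi ++ Letter.tau j :: w' ∧ w' ∈ LLbar c d j := by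
  conv_lhs => rw [LLbar, ← Language.one_add_self_mul_kstar_eq_kstar]
  simp only [Language.mem_add, Language.mem_one, Language.mem_mul, mem_kstar_letterLang,
    forall_mem_xiSet_iff]
  constructor
  · rintro (rfl | ⟨_, ⟨_, ⟨idx, rfl⟩, _, rfl, rfl⟩, w', hw', rfl⟩)
    · exact .inl rfl
    · exact .inr ⟨idx, w', by simp, hw'⟩
  · rintro (rfl | ⟨idx, w', rfl, hw'⟩)
    · exact .inl rfl
    · exact .inr ⟨_, ⟨_, ⟨idx, rfl⟩, _, rfl, rfl⟩, w', hw', by simp⟩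

theorem map_xi_mem_LLbar_iff {j : Fin (d + 1)} {idx : List (Fin c)} :
    idx.map Letter.xi ∈ LLbar c d j ↔ idx = [] := by
  rw [mem_LLbar_iff]
  constructor
  · rintro (h | ⟨idx', w', h, -⟩)
    · exact List.map_eq_nil_iff.mp h
    · exact absurd h (map_xi_ne_block _ _ _ _)
  · rintro rfl
    exact .inl rfl

theorem block_mem_LLbar_iff {j t : Fin (d + 1)} {idx : List (Fin c)} {w : List (Letter c d)} :
    idx.map Letter.xi ++ Letter.tau t :: w ∈ LLbar c d j ↔ t = j ∧ w ∈ LLbar c d j := by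
  rw [mem_LLbar_iff]
  constructor
  · rintro (h | ⟨idx', w', h, hw'⟩)
    · simp at h
    · obtain ⟨-, rfl, rfl⟩ := block_inj.mp h
      exact ⟨rfl, hw'⟩
  · rintro ⟨rfl, hw⟩
    exact .inr ⟨idx, w, rfl, hw⟩

/-- `LTail c d k = 𝓛_{k+1} τ_{k+1} ⋯ 𝓛_d τ_d 𝓛̄_0`. -/
def LTail (c d k : ℕ) : Language (Letter c d) :=
  (((List.finRange d).drop k).map fun j : Fin d =>
    LL c d j.succ * ({[Letter.tau j.succ]} : Language (Letter c d))).prod * LLbar c d 0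

theorem LTail_zero : LTail c d 0 = LFull c d := by
  rw [LTail, LFull, List.drop_zero]

theorem LTail_of_lt {k : ℕ} (hk : k < d) :
    LTail c d k = LL c d (⟨k, hk⟩ : Fin d).succ * {[Letter.tau (⟨k, hk⟩ : Fin d).succ]} *
      LTail c d (k + 1) := by
  rw [LTail, List.drop_eq_getElem_cons (by simpa using hk), List.map_cons, List.prod_cons]
  simp [LTail, mul_assoc]

theorem LTail_self : LTail c d d = LLbar c d 0 := by
  rw [LTail, List.drop_eq_nil_of_le (by simp), List.map_nil, List.prod_nil, one_mul]

theorem map_xi_mem_LTail_iff {k : ℕ} (hk : k ≤ d) {idx : List (Fin c)} :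
    idx.map Letter.xi ∈ LTail c d k ↔ idx = [] ∧ k = d := by
  rcases hk.lt_or_eq with hk | rfl
  · simpa [LTail_of_lt hk, hk.ne] using map_xi_notMem_LL_mul_tau_mul idx
  · simp [LTail_self, map_xi_mem_LLbar_iff]

theorem block_mem_LTail_iff_of_lt {k : ℕ} (hk : k < d) {t : Fin (d + 1)} {idx : List (Fin c)}
    {w : List (Letter c d)} :
    idx.map Letter.xi ++ Letter.tau t :: w ∈ LTail c d k ↔
      t = (⟨k, hk⟩ : Fin d).succ ∧ (w ∈ LTail c d k ∨ w ∈ LTail c d (k + 1)) := by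
  rw [LTail_of_lt hk, block_mem_LL_mul_tau_mul_iff]

theorem block_mem_LTail_self_iff {t : Fin (d + 1)} {idx : List (Fin c)} {w : List (Letter c d)} :
    idx.map Letter.xi ++ Letter.tau t :: w ∈ LTail c d d ↔ t = 0 ∧ w ∈ LTail c d d := by
  rw [LTail_self, block_mem_LLbar_iff]

theorem mem_LTail_iff {k : ℕ} (hk : k ≤ d) {w : List (Letter c d)} :
    w ∈ LTail c d k ↔ EndsInTau w ∧ TauAdmissible k (tauIdx w) := by
  induction w using induction_blocks generalizing k with
  | simple idx =>
    rw [map_xi_mem_LTail_iff hk, endsInTau_map_xi, tauIdx_map_xi, tauAdmissible_nil]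
    exact and_congr_right fun _ => ⟨fun h => h.ge, hk.antisymm⟩
  | block idx t w ih =>
    rw [endsInTau_block, tauIdx_block]
    rcases hk.lt_or_eq with hk | rfl
    · rw [block_mem_LTail_iff_of_lt hk, tauAdmissible_cons_of_lt hk, ih hk.le, ih hk]
      tauto
    · rw [block_mem_LTail_self_iff, tauAdmissible_self_cons, ih le_rfl]
      tauto

theorem mem_LFull_iff {w : List (Letter c d)} :
    w ∈ LFull c d ↔ EndsInTau w ∧ TauAdmissible 0 (tauIdx w) := by
  rw [← LTail_zero, mem_LTail_iff (Nat.zero_le d)]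

end Languages

section Eta

variable {c d : ℕ}

theorem eta_snd_apply (w : List (Letter c d)) (j : Fin d) :
    (eta w).2 j = (tauIdx w).countP (fun t => tauRank t ≤ j + 1) := by
  induction w with
  | nil => rfl
  | cons a w ih =>
    cases a with
    | xi i => exact ih
    | tau t =>
      change (if 1 ≤ (t : ℕ) ∧ (t : ℕ) ≤ j + 1 then _ else _) = _
      simp only [tauIdx_cons_tau, List.countP_cons, ih, ← tauRank_le_succ_iff]
      by_cases h : tauRank t ≤ j + 1 <;> simp [h]

theorem shiftMon_apply_zero (u : MonP c) (i : Fin c) : shiftMon u (i, 0) = 0 :=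
  Finsupp.mapDomain_of_notMem_range _ _ (by simp)

theorem shiftMon_apply_succ (u : MonP c) (i : Fin c) (l : ℕ) : shiftMon u (i, l + 1) = u (i, l) :=
  Finsupp.mapDomain_apply (fun _ _ h => by simpa [Prod.ext_iff] using h) u (i, l)

theorem eta_map_xi_append_fst_apply (idx : List (Fin c)) (w : List (Letter c d)) (i : Fin c)
    (l : ℕ) : (eta (idx.map Letter.xi ++ w)).1 (i, l) =
      (if l = 0 then idx.count i else 0) + (eta w).1 (i, l) := by
  induction idx with
  | nil => simp
  | cons i' idx ih =>
    simp only [List.map_cons, List.cons_append, eta]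
    rw [Finsupp.add_apply, ih, Finsupp.single_apply, List.count_cons]
    by_cases hl : l = 0 <;> by_cases hi : i' = i <;> simp [hl, hi] <;> omega

theorem eta_block_fst_apply_zero (idx : List (Fin c)) (t : Fin (d + 1)) (w : List (Letter c d))
    (i : Fin c) : (eta (idx.map Letter.xi ++ Letter.tau t :: w)).1 (i, 0) = idx.count i := by
  rw [eta_map_xi_append_fst_apply, if_pos rfl]
  exact add_eq_left.mpr (shiftMon_apply_zero _ i)

theorem eta_block_fst_apply_succ (idx : List (Fin c)) (t : Fin (d + 1)) (w : List (Letter c d))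
    (i : Fin c) (l : ℕ) :
    (eta (idx.map Letter.xi ++ Letter.tau t :: w)).1 (i, l + 1) = (eta w).1 (i, l) := by
  rw [eta_map_xi_append_fst_apply, if_neg l.succ_ne_zero, zero_add]
  exact shiftMon_apply_succ _ i l

end Eta

section SortedWords

variable {c d : ℕ}

def xiIdx (a : Fin c → ℕ) : List (Fin c) :=
  ((List.finRange c).map fun i => List.replicate (a i) i).flatten

theorem xiWord_eq_map_xiIdx (a : Fin c → ℕ) : xiWord c d a = (xiIdx a).map Letter.xi := by
  simp [xiWord, xiIdx, List.map_flatten, Function.comp_def]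

theorem count_xiIdx (a : Fin c → ℕ) (i : Fin c) : (xiIdx a).count i = a i := by
  simp [xiIdx, List.count_flatten, List.count_replicate, Function.comp_def, ← Fin.sum_univ_def]

theorem pairwise_xiIdx (a : Fin c → ℕ) : (xiIdx a).Pairwise (· ≤ ·) := by
  rw [xiIdx, List.pairwise_flatten, List.pairwise_map]
  refine ⟨by simp [List.pairwise_replicate], (List.pairwise_lt_finRange c).imp ?_⟩
  intro i j hij x hx y hy
  rw [List.eq_of_mem_replicate hx, List.eq_of_mem_replicate hy]
  exact hij.le

theorem eq_xiIdx_of_pairwise {idx : List (Fin c)} (h : idx.Pairwise (· ≤ ·)) :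
    idx = xiIdx fun i => idx.count i :=
  List.Perm.eq_of_pairwise' h (pairwise_xiIdx _)
    (List.perm_iff_count.mpr fun i => (count_xiIdx (fun i => idx.count i) i).symm)

theorem standard_iff_isChain {w : List (Letter c d)} :
    Standard w ↔ w.IsChain fun a b =>
      ∀ i j : Fin c, a = Letter.xi i → b = Letter.xi j → (i : ℕ) ≤ (j : ℕ) :=
  Iff.rfl

theorem standard_map_xi_iff {idx : List (Fin c)} :
    Standard (d := d) (idx.map Letter.xi) ↔ idx.Pairwise (· ≤ ·) := by
  have hrel : (fun a b : Fin c => ∀ i j : Fin c, Letter.xi (d := d) a = Letter.xi i →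
      Letter.xi (d := d) b = Letter.xi j → (i : ℕ) ≤ j) = (· ≤ ·) := by
    funext a b
    exact propext ⟨fun h => h a b rfl rfl, by rintro h i j ⟨⟩ ⟨⟩; exact h⟩
  rw [standard_iff_isChain, List.isChain_map, hrel, List.isChain_iff_pairwise]

theorem standard_append_tau_cons_iff {v w : List (Letter c d)} {t : Fin (d + 1)} :
    Standard (v ++ Letter.tau t :: w) ↔ Standard v ∧ Standard w := by
  simp only [standard_iff_isChain, List.isChain_append, List.isChain_cons, List.head?_cons,
    Option.mem_def, Option.some.injEq, forall_eq', reduceCtorEq, false_implies, implies_true,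
    true_and, and_true]

end SortedWords

section BlockWords

variable {c d : ℕ}

def blockWord (m : ℕ) (a : ℕ → Fin c → ℕ) (t : ℕ → Fin (d + 1)) : List (Letter c d) :=
  ((List.range m).map fun k => xiWord c d (a k) ++ [Letter.tau (t k)]).flatten

theorem canonWord_eq_blockWord (m : ℕ) (u : MonP c) (p : Fin d → ℕ) :
    canonWord c d m u p = blockWord m (fun k i => u (i, k)) (iotaIdx p) :=
  rfl

@[simp]
theorem blockWord_zero (a : ℕ → Fin c → ℕ) (t : ℕ → Fin (d + 1)) : blockWord 0 a t = [] :=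
  rfl

theorem blockWord_succ (m : ℕ) (a : ℕ → Fin c → ℕ) (t : ℕ → Fin (d + 1)) :
    blockWord (m + 1) a t =
      (xiIdx (a 0)).map Letter.xi ++ Letter.tau (t 0) ::
        blockWord m (fun k => a (k + 1)) (fun k => t (k + 1)) := by
  simp [blockWord, List.range_succ_eq_map, xiWord_eq_map_xiIdx, Function.comp_def]

theorem blockWord_congr {m : ℕ} {a : ℕ → Fin c → ℕ} {t t' : ℕ → Fin (d + 1)}
    (h : ∀ k < m, t k = t' k) : blockWord m a t = blockWord m a t' := by
  unfold blockWord
  congr 1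
  exact List.map_congr_left fun k hk => by rw [h k (List.mem_range.mp hk)]

theorem tauIdx_blockWord (m : ℕ) (a : ℕ → Fin c → ℕ) (t : ℕ → Fin (d + 1)) :
    tauIdx (blockWord m a t) = (List.range m).map t := by
  induction m generalizing a t with
  | zero => rfl
  | succ m ih => simp [blockWord_succ, ih, List.range_succ_eq_map]

theorem tauCount_blockWord (m : ℕ) (a : ℕ → Fin c → ℕ) (t : ℕ → Fin (d + 1)) :
    tauCount (blockWord m a t) = m := by
  simp [tauCount_eq_length_tauIdx, tauIdx_blockWord]

theorem endsInTau_blockWord (m : ℕ) (a : ℕ → Fin c → ℕ) (t : ℕ → Fin (d + 1)) :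
    EndsInTau (blockWord m a t) := by
  induction m generalizing a t with
  | zero => simp [EndsInTau]
  | succ m ih => simpa [blockWord_succ] using ih _ _

theorem standard_blockWord (m : ℕ) (a : ℕ → Fin c → ℕ) (t : ℕ → Fin (d + 1)) :
    Standard (blockWord m a t) := by
  induction m generalizing a t with
  | zero => exact List.isChain_nil
  | succ m ih =>
    rw [blockWord_succ, standard_append_tau_cons_iff, standard_map_xi_iff]
    exact ⟨pairwise_xiIdx _, ih _ _⟩

theorem eta_blockWord_fst_apply (m : ℕ) (a : ℕ → Fin c → ℕ) (t : ℕ → Fin (d + 1)) (i : Fin c)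
    (l : ℕ) : (eta (blockWord m a t)).1 (i, l) = if l < m then a l i else 0 := by
  induction m generalizing a t l with
  | zero => simp [eta]
  | succ m ih =>
    rw [blockWord_succ]
    cases l with
    | zero => simp [eta_block_fst_apply_zero, count_xiIdx]
    | succ l => simp [eta_block_fst_apply_succ, ih]

theorem eq_blockWord_of_standard {w : List (Letter c d)} (hstd : Standard w) (hend : EndsInTau w) :
    w = blockWord (tauCount w) (fun k i => (eta w).1 (i, k)) (fun k => (tauIdx w).getD k 0) := by
  induction w using induction_blocks with
  | simple idx =>
    obtain rfl := endsInTau_map_xi.mp hend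
    rfl
  | block idx t w ih =>
    rw [standard_append_tau_cons_iff, standard_map_xi_iff] at hstd
    rw [endsInTau_block] at hend
    rw [tauCount_eq_length_tauIdx, tauIdx_block, List.length_cons, ← tauCount_eq_length_tauIdx,
      blockWord_succ]
    conv_lhs => rw [eq_xiIdx_of_pairwise hstd.1, ih hstd.2 hend]
    simp [eta_block_fst_apply_zero, eta_block_fst_apply_succ]

end BlockWords

section IotaIdx

variable {d : ℕ}

theorem iotaIdx_eq_of_forall_iff {p : Fin d → ℕ} {k : ℕ} {t : Fin (d + 1)}
    (h : ∀ j : Fin d, k + 1 ≤ p j ↔ tauRank t ≤ j + 1) : iotaIdx p k = t := by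
  rcases tauRank_cases t with ⟨rfl, ht⟩ | ⟨s, rfl, ht⟩
  · refine dif_neg fun ⟨j, hj⟩ => ?_
    have := (h j).mp (Finset.mem_filter.mp hj).2
    omega
  · have hmem : s ∈ Finset.univ.filter fun j : Fin d => k + 1 ≤ p j := by simp [h, ht]
    rw [iotaIdx, dif_pos ⟨s, hmem⟩, Fin.succ_inj]
    refine le_antisymm (Finset.min'_le _ _ hmem) (Finset.le_min' _ _ _ fun j hj => ?_)
    have := (h j).mp (Finset.mem_filter.mp hj).2
    rw [Fin.le_def]
    omega

theorem tauRank_iotaIdx_le_iff {p : Fin d → ℕ} (hp : Monotone p) (k : ℕ) (j : Fin d) :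
    tauRank (iotaIdx p k) ≤ j + 1 ↔ k + 1 ≤ p j := by
  unfold iotaIdx
  split_ifs with hne
  · have hmin := Finset.mem_filter.mp (Finset.min'_mem _ hne)
    rw [tauRank_succ, Nat.add_le_add_iff_right, ← Fin.le_def]
    exact ⟨fun h => hmin.2.trans (hp h), fun h => Finset.min'_le _ _ (by simpa using h)⟩
  · have := j.isLt
    simp only [tauRank_zero]
    exact iff_of_false (by omega) fun h => hne ⟨j, by simpa using h⟩

theorem monotone_tauRank_iotaIdx {p : Fin d → ℕ} (hp : Monotone p) :
    Monotone fun k => tauRank (iotaIdx p k) := by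
  intro k k' hkk'
  dsimp only
  rcases tauRank_cases (iotaIdx p k') with ⟨-, h⟩ | ⟨j, -, h⟩
  · exact h ▸ tauRank_le _
  · rw [h, tauRank_iotaIdx_le_iff hp]
    have := (tauRank_iotaIdx_le_iff hp k' j).mp h.le
    omega

theorem countP_map_iotaIdx {p : Fin d → ℕ} (hp : Monotone p) {m : ℕ} {j : Fin d} (hpm : p j ≤ m) :
    ((List.range m).map (iotaIdx p)).countP (fun t => tauRank t ≤ j + 1) = p j := by
  rw [List.countP_map, List.countP_congr (q := fun k => k < p j) fun k _ => by
    simpa [Nat.succ_le_iff] using tauRank_iotaIdx_le_iff hp k j, List.countP_range_lt,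
    min_eq_left hpm]

theorem tauAdmissible_map_iotaIdx {p : Fin d → ℕ} (hp : StrictMono p) {m : ℕ}
    (hpm : ∀ j, 1 ≤ p j ∧ p j ≤ m) : TauAdmissible 0 ((List.range m).map (iotaIdx p)) := by
  refine ⟨?_, fun t _ => tauRank_pos t, fun j _ => List.mem_map.mpr ⟨p j - 1, ?_, ?_⟩⟩
  · rw [List.pairwise_map]
    exact (List.pairwise_lt_range).imp fun h => monotone_tauRank_iotaIdx hp.monotone h.le
  · have := hpm j
    exact List.mem_range.mpr (by omega)
  · refine iotaIdx_eq_of_forall_iff fun j' => ?_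
    rw [Nat.sub_add_cancel (hpm j).1, hp.le_iff_le, tauRank_succ, Nat.add_le_add_iff_right,
      Fin.le_def]

theorem iotaIdx_countP_eq_getElem {ts : List (Fin (d + 1))}
    (hts : ts.Pairwise (tauRank · ≤ tauRank ·)) {k : ℕ} (hk : k < ts.length) :
    iotaIdx (fun j => ts.countP (fun t => tauRank t ≤ j + 1)) k = ts[k] :=
  iotaIdx_eq_of_forall_iff fun _ => List.succ_le_countP_iff_of_pairwise hts _ hk

theorem strictMono_countP_of_tauAdmissible {ts : List (Fin (d + 1))} (hts : TauAdmissible 0 ts) :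
    StrictMono fun j : Fin d => ts.countP (fun t => tauRank t ≤ j + 1) := by
  intro j j' hjj'
  rw [Fin.lt_def] at hjj'
  refine List.countP_lt_countP (fun t _ h => ?_) (hts.2.2 j' (Nat.zero_le _)) ?_ ?_
  · simp only [decide_eq_true_eq] at h ⊢
    omega
  · simp
  · simp only [tauRank_succ, decide_eq_true_eq]
    omega

theorem one_le_countP_of_tauAdmissible {ts : List (Fin (d + 1))} (hts : TauAdmissible 0 ts)
    (j : Fin d) : 1 ≤ ts.countP (fun t => tauRank t ≤ j + 1) :=
  List.countP_pos_iff.mpr ⟨j.succ, hts.2.2 j (Nat.zero_le _), by simp⟩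

end IotaIdx

section Bijection

variable {c d : ℕ}

theorem eta_mem_MonFSet {w : List (Letter c d)} (hw : w ∈ LStd c d) :
    eta w ∈ MonFSet c d (tauCount w) := by
  obtain ⟨hend, hadm⟩ := mem_LFull_iff.mp hw.1
  have hp : (eta w).2 = fun j : Fin d => (tauIdx w).countP (fun t => tauRank t ≤ j + 1) :=
    funext (eta_snd_apply w)
  refine ⟨fun ⟨i, l⟩ hv => ?_, hp ▸ strictMono_countP_of_tauAdmissible hadm, fun j => ?_⟩
  · rw [Finsupp.mem_support_iff, eq_blockWord_of_standard hw.2 hend, eta_blockWord_fst_apply] at hv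
    by_contra hl
    exact hv (if_neg hl)
  · rw [hp, tauCount_eq_length_tauIdx]
    exact ⟨one_le_countP_of_tauAdmissible hadm j, List.countP_le_length⟩

theorem eq_canonWord_eta {w : List (Letter c d)} (hw : w ∈ LStd c d) :
    w = canonWord c d (tauCount w) (eta w).1 (eta w).2 := by
  obtain ⟨hend, hadm⟩ := mem_LFull_iff.mp hw.1
  refine (eq_blockWord_of_standard hw.2 hend).trans (blockWord_congr fun k hk => ?_)
  rw [tauCount_eq_length_tauIdx] at hk
  rw [funext (eta_snd_apply w), iotaIdx_countP_eq_getElem hadm.1 hk, List.getD_eq_getElem]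

theorem canonWord_mem_LStd {m : ℕ} {q : MonP c × (Fin d → ℕ)} (hq : q ∈ MonFSet c d m) :
    canonWord c d m q.1 q.2 ∈ LStd c d := by
  rw [canonWord_eq_blockWord]
  refine ⟨mem_LFull_iff.mpr ⟨endsInTau_blockWord _ _ _, ?_⟩, standard_blockWord _ _ _⟩
  rw [tauIdx_blockWord]
  exact tauAdmissible_map_iotaIdx hq.2.1 hq.2.2

theorem tauCount_canonWord (m : ℕ) (u : MonP c) (p : Fin d → ℕ) :
    tauCount (canonWord c d m u p) = m :=
  tauCount_blockWord _ _ _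

theorem eta_canonWord {m : ℕ} {q : MonP c × (Fin d → ℕ)} (hq : q ∈ MonFSet c d m) :
    eta (canonWord c d m q.1 q.2) = q := by
  obtain ⟨hu, hp, hpm⟩ := hq
  refine Prod.ext (Finsupp.ext fun ⟨i, l⟩ => ?_) (funext fun j => ?_)
  · rw [canonWord_eq_blockWord, eta_blockWord_fst_apply]
    split_ifs with hl
    · rfl
    · exact (Finsupp.notMem_support_iff.mp fun h => hl (hu _ h)).symm
  · rw [eta_snd_apply, canonWord_eq_blockWord, tauIdx_blockWord,
      countP_map_iotaIdx hp.monotone (hpm j).2]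

end Bijection

theorem mu_bijection_general (c d : ℕ) (m : ℕ) :
    Set.BijOn (fun w => eta w)
      {w : List (Letter c d) | w ∈ LStd c d ∧ tauCount w = m} (MonFSet c d m) ∧
    ∀ q ∈ MonFSet c d m,
      canonWord c d m q.1 q.2 ∈ LStd c d ∧
      tauCount (canonWord c d m q.1 q.2) = m ∧
      eta (canonWord c d m q.1 q.2) = q := by
  have canon : ∀ q ∈ MonFSet c d m, canonWord c d m q.1 q.2 ∈ LStd c d ∧
      tauCount (canonWord c d m q.1 q.2) = m ∧ eta (canonWord c d m q.1 q.2) = q :=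
    fun q hq => ⟨canonWord_mem_LStd hq, tauCount_canonWord _ _ _, eta_canonWord hq⟩
  refine ⟨⟨?_, ?_, ?_⟩, canon⟩
  · rintro w ⟨hw, rfl⟩
    exact eta_mem_MonFSet hw
  · rintro w₁ ⟨hw₁, rfl⟩ w₂ ⟨hw₂, hm⟩ (h : eta w₁ = eta w₂)
    rw [eq_canonWord_eta hw₁, eq_canonWord_eta hw₂, h, hm]
  · intro q hq
    obtain ⟨hstd, hm, heta⟩ := canon q hq
    exact ⟨_, ⟨hstd, hm⟩, heta⟩

/-- **The bijection `μ_m : 𝓛_std^(m) → Mon(F_m)`** (Proposition 3.3).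
For every `m ≥ 0`, the map `w ↦ η(w)` is a bijection from the set `𝓛_std^(m)` of standard
words of `𝓛` with exactly `m` τ-letters onto the set of monomials of `F_m` (hence `μ` is
a bijection `𝓛_std → Mon(F)`).  More precisely, the unique word `w ∈ 𝓛_std^(m)` mapping
to the monomial `x^u e_π = x_{•,1}^{u_1} ⋯ x_{•,m}^{u_m} e_π` is
`w = ξ^{u_1} τ_{ι(1)} ξ^{u_2} τ_{ι(2)} ⋯ ξ^{u_m} τ_{ι(m)}`, where `ι(k) = 0` if
`π(d) < k ≤ m` and `ι(k) = j` if `π(j-1) < k ≤ π(j)` (with `π(0) = 0`). -/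
theorem mu_bijection (c d : ℕ) (hc : 1 ≤ c) (m : ℕ) :
    Set.BijOn (fun w => eta w)
      {w : List (Letter c d) | w ∈ LStd c d ∧ tauCount w = m} (MonFSet c d m) ∧
    ∀ q ∈ MonFSet c d m,
      canonWord c d m q.1 q.2 ∈ LStd c d ∧
      tauCount (canonWord c d m q.1 q.2) = m ∧
      eta (canonWord c d m q.1 q.2) = q :=
  mu_bijection_general c d m

end
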